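/- For every λ-set S there is a sub-λ-set S¹ ≤ S such that all final elements of S¹ have the same length n. -/

import Mathlib

open Set

namespace Sh521

/-- Finite sequences of ordinals. -/
abbrev Seq := List Ordinal

/-- `W(η,S) = { i : η⌢⟨i⟩ ∈ S }`. -/
def Wset (S : Set Seq) (η : Seq) : Set Ordinal := {i | η ++ [i] ∈ S}

/-- `λ(η,S) = sup W(η,S)`. -/
noncomputable def lamOf (S : Set Seq) (η : Seq) : Ordinal := sSup (Wset S η)

/-- An ordinal which is a regular uncountable cardinal. -/
def IsRegUncountable (o : Ordinal) : Prop :=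
  ∃ κ : Cardinal, κ.IsRegular ∧ Cardinal.aleph0 < κ ∧ o = κ.ord

/-- `C` is unbounded below `κ`. -/
def UnboundedBelow (C : Set Ordinal) (κ : Ordinal) : Prop :=
  ∀ α < κ, ∃ β ∈ C, α ≤ β ∧ β < κ

/-- `C` is closed below `κ`: any limit ordinal `< κ` which is approached by members
of `C` belongs to `C`. -/
def ClosedBelow (C : Set Ordinal) (κ : Ordinal) : Prop :=
  ∀ δ < κ, Order.IsSuccLimit δ → (∀ β < δ, ∃ γ ∈ C, β ≤ γ ∧ γ < δ) → δ ∈ C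

/-- `C` is a stationary subset of `κ`: it meets every club of `κ`. -/
def StationaryBelow (C : Set Ordinal) (κ : Ordinal) : Prop :=
  ∀ D : Set Ordinal, ClosedBelow D κ → UnboundedBelow D κ → (C ∩ D).Nonempty

/-- Definition 3.1: `S` is a `λ`-set: a nonempty set of strictly decreasing finite
sequences of ordinals `< λ`, closed under initial segments, such that whenever
`W(η,S) ≠ ∅`, `λ(η,S)` is a regular uncountable cardinal and `W(η,S)` is stationary
in it; and `λ(⟨⟩,S) = λ`. -/
def IsLambdaSet (lam : Ordinal) (S : Set Seq) : Prop :=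
  S.Nonempty ∧
  (∀ η ∈ S, List.Chain' (fun a b => a > b) η) ∧
  (∀ η ∈ S, ∀ i ∈ η, i < lam) ∧
  (∀ η ∈ S, ∀ ν : Seq, ν <+: η → ν ∈ S) ∧
  (∀ η ∈ S, (Wset S η).Nonempty →
    IsRegUncountable (lamOf S η) ∧ StationaryBelow (Wset S η) (lamOf S η)) ∧
  lamOf S [] = lam

/-- The final elements of `S`. -/
def Sf (S : Set Seq) : Set Seq := {η | η ∈ S ∧ Wset S η = ∅}

/-- The initial elements of `S`. -/
def Si (S : Set Seq) : Set Seq := S \ Sf S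

/-- `S¹ ≤ S²` : `S¹` is a sub-`λ`-set of `S²`. -/
def SubLambdaSet (S1 S2 : Set Seq) : Prop :=
  S1 ⊆ S2 ∧ ∀ η ∈ S1, lamOf S1 η = lamOf S2 η

end Sh521

/-! Say that `η` has uniform height `n` if `n = 0` and `η` is final, or `n = m + 1`, `η ∈ S` and
the `i` for which `η⌢⟨i⟩` has uniform height `m` form a stationary subset of `λ(η,S)`.
Every node has some uniform height: by induction along extensions, which is well founded because
the sequences decrease, the successors `W(η,S)` are covered by countably many sets according to
the height of `η⌢⟨i⟩`, and a stationary subset of a regular uncountable cardinal cannot be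
covered by countably many nonstationary ones. If `⟨⟩` has uniform height `n`, then
`S¹ = {ρ | every initial segment ν of ρ has uniform height n - |ν|}` works: its final elements
have height `0`, hence length `n`, and the successor sets of `S¹` are stationary subsets of those
of `S`, so they have the same supremum. -/

namespace Sh521

section Stationary

variable {κ : Ordinal} {C : Set Ordinal}

lemma isClub_preimage {D : Set Ordinal} (hc : ClosedBelow D κ) (hu : UnboundedBelow D κ) :
    IsClub ((↑) ⁻¹' D : Set (Iio κ)) := by
  refine ⟨fun d hdD hd _ a ha => ?_, fun x => ?_⟩
  · by_cases had : a ∈ d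
    · exact hdD had
    have happ : ∀ β < (a : Ordinal), ∃ γ ∈ d, β < (γ : Ordinal) ∧ γ < a := by
      intro β hβ
      by_contra! h
      refine hβ.not_ge (ha.2 fun γ hγ => ?_ : a ≤ ⟨β, hβ.trans a.2⟩)
      by_contra! hγβ
      exact (h γ hγ hγβ).not_gt (lt_of_le_of_ne (ha.1 hγ) (ne_of_mem_of_not_mem hγ had))
    obtain ⟨γ₀, hγ₀⟩ := hd
    have hlim : Order.IsSuccLimit (a : Ordinal) := by
      refine ⟨not_isMin_of_lt (b := (γ₀ : Ordinal)) ?_,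
        Order.isSuccPrelimit_of_succ_lt fun β hβ => ?_⟩
      · exact Subtype.coe_lt_coe.2 (lt_of_le_of_ne (ha.1 hγ₀) (ne_of_mem_of_not_mem hγ₀ had))
      · obtain ⟨γ, -, hβγ, hγa⟩ := happ β hβ
        exact (Order.succ_le_of_lt hβγ).trans_lt hγa
    exact hc a a.2 hlim fun β hβ =>
      let ⟨γ, hγ, hβγ, hγa⟩ := happ β hβ
      ⟨γ, hdD hγ, hβγ.le, hγa⟩
  · obtain ⟨β, hβ, hxβ, hβκ⟩ := hu x x.2
    exact ⟨⟨β, hβκ⟩, hβ, hxβ⟩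

lemma closedBelow_image_of_isClub {t : Set (Iio κ)} (ht : IsClub t) :
    ClosedBelow ((↑) '' t) κ := by
  intro δ hδ hlim happ
  have hlub : IsLUB {x | x ∈ t ∧ (x : Ordinal) < δ} ⟨δ, hδ⟩ := by
    refine ⟨fun x hx => hx.2.le, fun b hb => ?_⟩
    by_contra! hbδ
    obtain ⟨_, ⟨γ, hγ, rfl⟩, hbγ, hγδ⟩ := happ (Order.succ b) (hlim.succ_lt hbδ)
    exact (Order.lt_succ (b : Ordinal)).not_ge (hbγ.trans (hb ⟨hγ, hγδ⟩))
  have hne : {x | x ∈ t ∧ (x : Ordinal) < δ}.Nonempty := by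
    obtain ⟨_, ⟨γ, hγ, rfl⟩, -, hγδ⟩ := happ 0 hlim.bot_lt
    exact ⟨γ, hγ, hγδ⟩
  exact ⟨_, ht.dirSupClosed (fun x hx => hx.1) hne (Std.Total.directedOn _) hlub, rfl⟩

lemma unboundedBelow_image_of_isClub {t : Set (Iio κ)} (ht : IsClub t) :
    UnboundedBelow ((↑) '' t) κ := fun α hα =>
  let ⟨y, hy, hαy⟩ := ht.isCofinal ⟨α, hα⟩
  ⟨y, ⟨y, hy, rfl⟩, hαy, y.2⟩

lemma stationaryBelow_iff_isStationary :
    StationaryBelow C κ ↔ IsStationary ((↑) ⁻¹' C : Set (Iio κ)) := by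
  refine ⟨fun h t ht => ?_, fun h D hc hu => ?_⟩
  · obtain ⟨_, hC, x, hx, rfl⟩ :=
      h _ (closedBelow_image_of_isClub ht) (unboundedBelow_image_of_isClub ht)
    exact ⟨x, hC, hx⟩
  · obtain ⟨x, hC, hD⟩ := h (isClub_preimage hc hu)
    exact ⟨x, hC, hD⟩

lemma StationaryBelow.nonempty (h : StationaryBelow C κ) : C.Nonempty :=
  (stationaryBelow_iff_isStationary.1 h).nonempty.image _ |>.mono (image_preimage_subset _ _)

lemma StationaryBelow.mono {C' : Set Ordinal} (h : StationaryBelow C κ) (hCC' : C ⊆ C') :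
    StationaryBelow C' κ := fun D hc hu => (h D hc hu).mono (inter_subset_inter_left D hCC')

lemma IsRegUncountable.isSuccLimit (hκ : IsRegUncountable κ) : Order.IsSuccLimit κ := by
  obtain ⟨c, hc, -, rfl⟩ := hκ
  exact Cardinal.isSuccLimit_ord hc.aleph0_le

lemma IsRegUncountable.cof_Iio_ne_aleph0 (hκ : IsRegUncountable κ) :
    Order.cof (Iio κ) ≠ Cardinal.aleph0 := by
  obtain ⟨c, hc, hc0, rfl⟩ := hκ
  rw [Ordinal.cof_Iio, ← Ordinal.lift_cof, hc.cof_ord, Ne, Cardinal.lift_eq_aleph0]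
  exact hc0.ne'

lemma StationaryBelow.exists_of_subset_iUnion (hκ : IsRegUncountable κ)
    (h : StationaryBelow C κ) {A : ℕ → Set Ordinal} (hA : C ⊆ ⋃ m, A m) :
    ∃ m, StationaryBelow (A m) κ := by
  simp_rw [stationaryBelow_iff_isStationary] at h ⊢
  rw [← isStationary_iUnion_iff_of_countable hκ.cof_Iio_ne_aleph0, ← preimage_iUnion]
  exact h.mono (preimage_mono hA)

lemma StationaryBelow.unboundedBelow (h : StationaryBelow C κ) : UnboundedBelow C κ := by
  intro α hα
  have hc : ClosedBelow (Ico α κ) κ := fun δ hδ hlim happ => by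
    obtain ⟨γ, hγ, -, hγδ⟩ := happ 0 hlim.bot_lt
    exact ⟨hγ.1.trans hγδ.le, hδ⟩
  have hu : UnboundedBelow (Ico α κ) κ := fun β hβ =>
    ⟨max α β, ⟨le_max_left _ _, max_lt hα hβ⟩, le_max_right _ _, max_lt hα hβ⟩
  obtain ⟨β, hβC, hαβ, hβκ⟩ := h _ hc hu
  exact ⟨β, hβC, hαβ, hβκ⟩

lemma StationaryBelow.sSup_eq {W : Set Ordinal} (hCW : C ⊆ W) (hW : BddAbove W)
    (hlim : Order.IsSuccLimit (sSup W)) (h : StationaryBelow C (sSup W)) : sSup C = sSup W := by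
  refine (csSup_le_csSup hW h.nonempty hCW).antisymm (not_lt.1 fun hlt => ?_)
  obtain ⟨β, hβC, hβ, -⟩ := h.unboundedBelow _ (hlim.succ_lt hlt)
  exact (Order.lt_succ (sSup C)).not_ge (hβ.trans (le_csSup (hW.mono hCW) hβC))

end Stationary

section LambdaSet

variable {lam : Ordinal} {S T : Set Seq} {η : Seq}

lemma wset_mono (hTS : T ⊆ S) (η : Seq) : Wset T η ⊆ Wset S η := fun _ hi => hTS hi

lemma IsLambdaSet.nil_mem (hS : IsLambdaSet lam S) : [] ∈ S :=
  let ⟨η, hη⟩ := hS.1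
  hS.2.2.2.1 η hη [] η.nil_prefix

lemma IsLambdaSet.bddAbove_wset (hS : IsLambdaSet lam S) (η : Seq) : BddAbove (Wset S η) :=
  ⟨lam, fun i hi => (hS.2.2.1 _ hi i (by simp)).le⟩

lemma IsLambdaSet.lt_of_mem_wset_concat (hS : IsLambdaSet lam S) {i j : Ordinal}
    (hj : j ∈ Wset S (η ++ [i])) : j < i := by
  have hchain : List.IsChain (· > ·) (η ++ [i] ++ [j]) := hS.2.1 _ hj
  rw [List.isChain_append] at hchain
  exact hchain.2.2 i (by simp) j rfl

lemma IsLambdaSet.lamOf_eq_of_stationary (hS : IsLambdaSet lam S) (hTS : T ⊆ S) (hη : η ∈ S)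
    (h : Wset S η = ∅ ∨ StationaryBelow (Wset T η) (lamOf S η)) : lamOf T η = lamOf S η := by
  rcases h with hempty | hst
  · have hemptyT : Wset T η = ∅ := subset_empty_iff.1 (hempty ▸ wset_mono hTS η)
    rw [lamOf, lamOf, hempty, hemptyT]
  · have hreg := (hS.2.2.2.2.1 η hη (hst.nonempty.mono (wset_mono hTS η))).1
    exact hst.sSup_eq (wset_mono hTS η) (hS.bddAbove_wset η) hreg.isSuccLimit

theorem IsLambdaSet.of_stationary_subset (hS : IsLambdaSet lam S) (hTS : T ⊆ S)
    (hT : T.Nonempty) (hpre : ∀ η ∈ T, ∀ ν : Seq, ν <+: η → ν ∈ T)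
    (hst : ∀ η ∈ T, Wset S η = ∅ ∨ StationaryBelow (Wset T η) (lamOf S η)) :
    IsLambdaSet lam T ∧ SubLambdaSet T S := by
  have hlam : ∀ η ∈ T, lamOf T η = lamOf S η := fun η hη =>
    hS.lamOf_eq_of_stationary hTS (hTS hη) (hst η hη)
  have hnil : [] ∈ T := let ⟨η, hη⟩ := hT; hpre η hη [] η.nil_prefix
  refine ⟨⟨hT, fun η hη => hS.2.1 η (hTS hη), fun η hη => hS.2.2.1 η (hTS hη), hpre,
    fun η hη hne => ?_, (hlam [] hnil).trans hS.2.2.2.2.2⟩, hTS, hlam⟩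
  have hneS := hne.mono (wset_mono hTS η)
  have hstT : StationaryBelow (Wset T η) (lamOf S η) :=
    (hst η hη).resolve_left hneS.ne_empty
  rw [hlam η hη]
  exact ⟨(hS.2.2.2.2.1 η (hTS hη) hneS).1, hstT⟩

end LambdaSet

def UniformHeight (S : Set Seq) : ℕ → Set Seq
  | 0 => Sf S
  | n + 1 => {η | η ∈ S ∧ StationaryBelow {i | η ++ [i] ∈ UniformHeight S n} (lamOf S η)}

section UniformHeight

variable {lam : Ordinal} {S : Set Seq} {η : Seq}

lemma uniformHeight_subset : ∀ n, UniformHeight S n ⊆ S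
  | 0 => fun _ hη => hη.1
  | _ + 1 => fun _ hη => hη.1

lemma IsLambdaSet.exists_uniformHeight_of_forall_concat (hS : IsLambdaSet lam S)
    (hη : η ∈ S) (h : ∀ i ∈ Wset S η, ∃ n, η ++ [i] ∈ UniformHeight S n) :
    ∃ n, η ∈ UniformHeight S n := by
  rcases (Wset S η).eq_empty_or_nonempty with hempty | hne
  · exact ⟨0, hη, hempty⟩
  obtain ⟨hreg, hst⟩ := hS.2.2.2.2.1 η hη hne
  obtain ⟨m, hm⟩ := hst.exists_of_subset_iUnion hreg
    (A := fun m => {i | η ++ [i] ∈ UniformHeight S m}) fun i hi => mem_iUnion.2 (h i hi)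
  exact ⟨m + 1, hη, hm⟩

/-- Induction on a strict bound for `W(η,S)`: since sequences in `S` decrease, `i` bounds
`W(η⌢⟨i⟩,S)`. -/
lemma IsLambdaSet.exists_uniformHeight (hS : IsLambdaSet lam S) (hη : η ∈ S) :
    ∃ n, η ∈ UniformHeight S n := by
  suffices h : ∀ α, ∀ η ∈ S, (∀ i ∈ Wset S η, i < α) → ∃ n, η ∈ UniformHeight S n from
    h lam η hη fun i hi => hS.2.2.1 _ hi i (by simp)
  intro α
  induction α using WellFoundedLT.induction with
  | _ α ih =>
    intro η hη hbound
    exact hS.exists_uniformHeight_of_forall_concat hη fun i hi =>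
      ih i (hbound i hi) _ hi fun _ hj => hS.lt_of_mem_wset_concat hj

end UniformHeight

def uniformSubtree (S : Set Seq) (n : ℕ) : Set Seq :=
  {ρ | ∀ ν, ν <+: ρ → ν.length ≤ n ∧ ν ∈ UniformHeight S (n - ν.length)}

section UniformSubtree

variable {S : Set Seq} {n : ℕ} {ρ : Seq}

lemma uniformSubtree_subset : uniformSubtree S n ⊆ S := fun ρ hρ =>
  uniformHeight_subset _ (hρ ρ (List.prefix_refl ρ)).2

lemma mem_uniformSubtree_of_prefix {ν : Seq} (hρ : ρ ∈ uniformSubtree S n) (hν : ν <+: ρ) :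
    ν ∈ uniformSubtree S n := fun μ hμ => hρ μ (hμ.trans hν)

lemma nil_mem_uniformSubtree (h : [] ∈ UniformHeight S n) : [] ∈ uniformSubtree S n := by
  intro ν hν
  rw [List.prefix_nil.1 hν]
  exact ⟨Nat.zero_le n, h⟩

lemma concat_mem_uniformSubtree {i : Ordinal} (hρ : ρ ∈ uniformSubtree S n)
    (hlen : ρ.length < n) (hi : ρ ++ [i] ∈ UniformHeight S (n - (ρ.length + 1))) :
    ρ ++ [i] ∈ uniformSubtree S n := by
  intro ν hν
  rcases List.prefix_concat_iff.1 hν with rfl | hν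
  · simpa using ⟨hlen, hi⟩
  · exact hρ ν hν

lemma uniformSubtree_cases (hρ : ρ ∈ uniformSubtree S n) :
    ρ.length = n ∧ Wset S ρ = ∅ ∨
      StationaryBelow (Wset (uniformSubtree S n) ρ) (lamOf S ρ) := by
  obtain ⟨hlen, hheight⟩ := hρ ρ (List.prefix_refl ρ)
  rcases hk : n - ρ.length with _ | m
  · rw [hk] at hheight
    exact Or.inl ⟨by omega, hheight.2⟩
  · rw [hk] at hheight
    refine Or.inr (hheight.2.mono fun i hi => concat_mem_uniformSubtree hρ (by omega) ?_)
    rwa [show n - (ρ.length + 1) = m by omega]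

lemma length_eq_of_mem_sf_uniformSubtree (hρ : ρ ∈ Sf (uniformSubtree S n)) : ρ.length = n :=
  ((uniformSubtree_cases hρ.1).resolve_right fun hst => hst.nonempty.ne_empty hρ.2).1

end UniformSubtree

/-- Claim 3.2(6)(a). Every `λ`-set has a sub-`λ`-set all of whose
final elements have the same length `n`. -/
theorem uniform_length_sub_lambdaSet (lam : Ordinal) (S : Set Seq)
    (hS : IsLambdaSet lam S) :
    ∃ S1 : Set Seq, IsLambdaSet lam S1 ∧ SubLambdaSet S1 S ∧
      ∃ n : ℕ, ∀ η ∈ Sf S1, η.length = n := by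
  obtain ⟨n, hn⟩ := hS.exists_uniformHeight hS.nil_mem
  obtain ⟨hT, hTS⟩ := hS.of_stationary_subset uniformSubtree_subset
    ⟨[], nil_mem_uniformSubtree hn⟩ (fun _ hρ _ hν => mem_uniformSubtree_of_prefix hρ hν)
    fun _ hρ => (uniformSubtree_cases hρ).imp_left And.right
  exact ⟨uniformSubtree S n, hT, hTS, n, fun _ hρ => length_eq_of_mem_sf_uniformSubtree hρ⟩

end Sh521
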